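/- Causally-precedes is monotone under trace extension (knowable CP orderings persist): if a well-formed trace tr is a prefix of a well-formed trace tr', then for any events e, e' of tr, e CP e' with respect to tr implies e CP e' with respect to tr'. -/
import Mathlib

/-- An event of an execution trace: the `i`-th write to variable `x`,
a read of variable `x` by thread `T` between the `i`-th and `(i+1)`-th writes,
the `i`-th acquire of lock `m`, or the `i`-th release of lock `m`. -/
inductive Event where
  | write (x i : ℕ)
  | read (x i T : ℕ)
  | acquire (m i : ℕ)
  | release (m i : ℕ)
deriving DecidableEq

/-- An execution trace: a finite sequence of events together with the
thread that executes each event. -/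
structure Trace where
  events : List Event
  thread : Event → ℕ

namespace Trace

/-- `tr.Before e e'`: event `e` occurs strictly before `e'` in the trace. -/
def Before (tr : Trace) (e e' : Event) : Prop :=
  ∃ i j : ℕ, i < j ∧ tr.events[i]? = some e ∧ tr.events[j]? = some e'

/-- Program order: `e <PO e'` iff `e` occurs strictly before `e'` in the trace
and both are executed by the same thread. -/
def PO (tr : Trace) (e e' : Event) : Prop :=
  tr.Before e e' ∧ tr.thread e = tr.thread e'

/-- `≤PO`: the reflexive closure of program order. -/
def POle (tr : Trace) (e e' : Event) : Prop :=
  e = e' ∨ tr.PO e e'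

/-- Happens-before: the smallest relation containing program order,
relating each release of a lock to every later acquire of the same lock,
and closed under composition with itself. -/
inductive HB (tr : Trace) : Event → Event → Prop
  | po {e e' : Event} : tr.PO e e' → HB tr e e'
  | sync {m i j : ℕ} : tr.Before (Event.release m i) (Event.acquire m j) →
      HB tr (Event.release m i) (Event.acquire m j)
  | trans {e e'' e' : Event} : HB tr e e'' → HB tr e'' e' → HB tr e e'

/-- `≤HB`: the reflexive closure of happens-before. -/
def HBle (tr : Trace) (e e' : Event) : Prop :=
  e = e' ∨ tr.HB e e'

/-- The variable accessed by an event (writes and reads only). -/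
def accessedVar : Event → Option ℕ
  | Event.write x _ => some x
  | Event.read x _ _ => some x
  | _ => none

/-- Whether an event is a write. -/
def IsWrite : Event → Prop
  | Event.write _ _ => True
  | _ => False

/-- Two events conflict if they access the same variable, at least one is a
write, and they are executed by different threads. -/
def Conflict (tr : Trace) (e e' : Event) : Prop :=
  (∃ x : ℕ, accessedVar e = some x ∧ accessedVar e' = some x) ∧
  (IsWrite e ∨ IsWrite e') ∧
  tr.thread e ≠ tr.thread e'

/-- Causally-precedes: the smallest relation satisfying
(a) `rel(m,i) CP acq(m,j)` whenever two critical sections on `m` contain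
conflicting events; (b) `rel(m,i) CP acq(m,j)` whenever
`acq(m,i) CP rel(m,j)`; and (c) closure under left and right
composition with happens-before. -/
inductive CP (tr : Trace) : Event → Event → Prop
  | ruleA {m i j : ℕ} {e e' : Event} :
      tr.Before e e' → tr.Conflict e e' →
      tr.POle (Event.acquire m i) e → tr.POle e (Event.release m i) →
      tr.POle (Event.acquire m j) e' → tr.POle e' (Event.release m j) →
      CP tr (Event.release m i) (Event.acquire m j)
  | ruleB {m i j : ℕ} :
      CP tr (Event.acquire m i) (Event.release m j) →
      CP tr (Event.release m i) (Event.acquire m j)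
  | ruleC_right {e e'' e' : Event} : CP tr e e'' → tr.HB e'' e' → CP tr e e'
  | ruleC_left {e e'' e' : Event} : tr.HB e e'' → CP tr e'' e' → CP tr e e'

/-- Well-formedness of an execution trace: events are pairwise distinct;
each release is preceded by the matching acquire; each acquire of a lock is
preceded by the release of the previous critical section on that lock
(a thread acquires only free locks, and critical sections on the same lock
do not overlap); an acquire and its matching release are executed by the
same thread; critical sections are well-nested; the writes to each variable
occur in index order; and a read `rd(x,i,T)` is executed by thread `T` and
occurs after `wr(x,i)` and before `wr(x,i+1)`. -/
structure WellFormed (tr : Trace) : Prop where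
  nodup : tr.events.Nodup
  acqBeforeRel : ∀ m i : ℕ, Event.release m i ∈ tr.events →
      Event.acquire m i ∈ tr.events ∧
      tr.Before (Event.acquire m i) (Event.release m i)
  relBeforeNextAcq : ∀ m i : ℕ, Event.acquire m (i + 1) ∈ tr.events →
      Event.release m i ∈ tr.events ∧
      tr.Before (Event.release m i) (Event.acquire m (i + 1))
  acqRelSameThread : ∀ m i : ℕ, Event.release m i ∈ tr.events →
      tr.thread (Event.acquire m i) = tr.thread (Event.release m i)
  wellNested : ∀ m i n k : ℕ,
      tr.thread (Event.acquire m i) = tr.thread (Event.acquire n k) →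
      Event.release m i ∈ tr.events →
      tr.Before (Event.acquire m i) (Event.acquire n k) →
      tr.Before (Event.acquire n k) (Event.release m i) →
      Event.release n k ∈ tr.events ∧
      tr.Before (Event.release n k) (Event.release m i)
  writesOrdered : ∀ x i : ℕ, Event.write x (i + 1) ∈ tr.events →
      Event.write x i ∈ tr.events ∧
      tr.Before (Event.write x i) (Event.write x (i + 1))
  readPlacement : ∀ x i T : ℕ, Event.read x i T ∈ tr.events →
      tr.thread (Event.read x i T) = T ∧
      Event.write x i ∈ tr.events ∧
      tr.Before (Event.write x i) (Event.read x i T) ∧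
      (Event.write x (i + 1) ∈ tr.events →
        tr.Before (Event.read x i T) (Event.write x (i + 1)))

/-- `tr` is a prefix of `tr'`: `tr'` is obtained from `tr` by appending
events at the end (and the thread assignment is unchanged). -/
def IsPrefixOf (tr tr' : Trace) : Prop :=
  tr.events <+: tr'.events ∧ tr.thread = tr'.thread

end Trace

namespace Trace

lemma getElem?_mono {tr tr' : Trace} (hpre : tr.IsPrefixOf tr') {i : ℕ}
    {e : Event} (h : tr.events[i]? = some e) : tr'.events[i]? = some e := by
  obtain ⟨t, ht⟩ := hpre.1
  rw [← ht, List.getElem?_append, if_pos (List.getElem?_eq_some_iff.mp h).1]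
  exact h

lemma before_mono {tr tr' : Trace} (hpre : tr.IsPrefixOf tr') {e e' : Event}
    (h : tr.Before e e') : tr'.Before e e' := by
  obtain ⟨i, j, hij, hi, hj⟩ := h
  exact ⟨i, j, hij, getElem?_mono hpre hi, getElem?_mono hpre hj⟩

lemma po_mono {tr tr' : Trace} (hpre : tr.IsPrefixOf tr') {e e' : Event}
    (h : tr.PO e e') : tr'.PO e e' :=
  ⟨before_mono hpre h.1, hpre.2 ▸ h.2⟩

lemma pole_mono {tr tr' : Trace} (hpre : tr.IsPrefixOf tr') {e e' : Event}
    (h : tr.POle e e') : tr'.POle e e' :=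
  h.imp id (po_mono hpre)

lemma hb_mono {tr tr' : Trace} (hpre : tr.IsPrefixOf tr') {e e' : Event}
    (h : tr.HB e e') : tr'.HB e e' := by
  induction h with
  | po h => exact HB.po (po_mono hpre h)
  | sync h => exact HB.sync (before_mono hpre h)
  | trans _ _ ih1 ih2 => exact HB.trans ih1 ih2

end Trace

/-- Causally-precedes is monotone under trace extension: if a
well-formed trace `tr` is a prefix of a well-formed trace `tr'`, then for
any events `e`, `e'` of `tr`, `e CP e'` w.r.t.\ `tr` implies `e CP e'`
w.r.t.\ `tr'`. -/
theorem cp_monotone_under_extension (tr tr' : Trace)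
    (hwf : tr.WellFormed) (hwf' : tr'.WellFormed)
    (hpre : tr.IsPrefixOf tr') :
    ∀ e e' : Event, e ∈ tr.events → e' ∈ tr.events →
      tr.CP e e' → tr'.CP e e' := by
  intro e e' h1 h2 h
  clear h1 h2
  induction h with
  | ruleA hb hc h1 h2 h3 h4 =>
      exact Trace.CP.ruleA (Trace.before_mono hpre hb)
        ⟨hc.1, hc.2.1, hpre.2 ▸ hc.2.2⟩
        (Trace.pole_mono hpre h1) (Trace.pole_mono hpre h2)
        (Trace.pole_mono hpre h3) (Trace.pole_mono hpre h4)
  | ruleB _ ih => exact Trace.CP.ruleB ih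
  | ruleC_right _ hhb ih => exact Trace.CP.ruleC_right ih (Trace.hb_mono hpre hhb)
  | ruleC_left hhb _ ih => exact Trace.CP.ruleC_left (Trace.hb_mono hpre hhb) ih
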